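/- arXiv:2310.07692 — 2 statements merged into one kernel-verified Lean document; each statement's English description precedes it below -/
import Mathlib

section
/- Let G be a standard normal random variable, a ∈ ℝ, b ∈ ℝ with b ≠ 0. Then E[bG·(a + bG)⁺] = b²·Φ(a/|b|), where Φ is the standard normal CDF. -/
open MeasureTheory ProbabilityTheory Real

/-- The standard normal cumulative distribution function `Φ`. -/
noncomputable def stdNormalCDF (x : ℝ) : ℝ :=
  ((gaussianReal 0 1) (Set.Iic x)).toReal

open Filter Topology

lemma pdf_eq (x : ℝ) : gaussianPDFReal 0 1 x = (Real.sqrt (2*π))⁻¹ * Real.exp (-(1/2) * x^2) := by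
  simp only [gaussianPDFReal, NNReal.coe_one, mul_one, sub_zero]
  congr 1
  ring

lemma pdf_neg (x : ℝ) : gaussianPDFReal 0 1 (-x) = gaussianPDFReal 0 1 x := by
  simp [gaussianPDFReal]

lemma integral_gaussian_eq (g : ℝ → ℝ) :
    ∫ x, g x ∂(gaussianReal 0 1) = ∫ x, gaussianPDFReal 0 1 x * g x := by
  rw [gaussianReal_of_var_ne_zero 0 one_ne_zero]
  have h : gaussianPDF 0 1 = fun x => ((gaussianPDFReal 0 1 x).toNNReal : ENNReal) := rfl
  rw [h, integral_withDensity_eq_integral_smul (measurable_gaussianPDFReal 0 1).real_toNNReal]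
  congr 1
  ext x
  simp [NNReal.smul_def, Real.coe_toNNReal _ (gaussianPDFReal_nonneg 0 1 x)]

lemma cdf_eq (y : ℝ) : stdNormalCDF y = ∫ x in Set.Iic y, gaussianPDFReal 0 1 x := by
  rw [stdNormalCDF, gaussianReal_apply_eq_integral 0 one_ne_zero]
  exact ENNReal.toReal_ofReal (integral_nonneg fun x => gaussianPDFReal_nonneg 0 1 x)

lemma integrable_E : Integrable (fun x : ℝ => Real.exp (-(1/2) * x^2)) :=
  integrable_exp_neg_mul_sq one_half_pos

lemma integrable_xE : Integrable (fun x : ℝ => x * Real.exp (-(1/2) * x^2)) :=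
  integrable_mul_exp_neg_mul_sq one_half_pos

lemma integrable_x2E : Integrable (fun x : ℝ => x^2 * Real.exp (-(1/2) * x^2)) := by
  have h := integrable_rpow_mul_exp_neg_mul_sq one_half_pos (s := 2) (by norm_num)
  have he : (fun x : ℝ => x ^ (2:ℝ) * Real.exp (-(1/2) * x^2))
      = fun x : ℝ => x^2 * Real.exp (-(1/2) * x^2) := by
    funext x
    rw [show (2:ℝ) = ((2:ℕ):ℝ) by norm_num, Real.rpow_natCast]
  rwa [he] at h

lemma integrable_quad (c : ℝ) :
    Integrable (fun x : ℝ => (x*(x-c) - 1) * Real.exp (-(1/2) * x^2)) := by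
  have : (fun x : ℝ => (x*(x-c) - 1) * Real.exp (-(1/2) * x^2))
      = fun x : ℝ => x^2 * Real.exp (-(1/2)*x^2) - c * (x * Real.exp (-(1/2)*x^2))
          - Real.exp (-(1/2)*x^2) := by funext x; ring
  rw [this]
  exact (integrable_x2E.sub (integrable_xE.const_mul c)).sub integrable_E

lemma integrable_xxc (c : ℝ) :
    Integrable (fun x : ℝ => (x*(x-c)) * Real.exp (-(1/2) * x^2)) := by
  have : (fun x : ℝ => (x*(x-c)) * Real.exp (-(1/2) * x^2))
      = fun x : ℝ => x^2 * Real.exp (-(1/2)*x^2) - c * (x * Real.exp (-(1/2)*x^2)) := by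
    funext x; ring
  rw [this]
  exact integrable_x2E.sub (integrable_xE.const_mul c)

lemma halfline_eq (c : ℝ) :
    ∫ x in Set.Ioi c, (x*(x-c)) * Real.exp (-(1/2) * x^2)
      = ∫ x in Set.Ioi c, Real.exp (-(1/2) * x^2) := by
  have hderiv : ∀ x ∈ Set.Ici c, HasDerivAt (fun t => (c - t) * Real.exp (-(1/2)*t^2))
      ((x*(x-c) - 1) * Real.exp (-(1/2)*x^2)) x := by
    intro x _
    have h1 : HasDerivAt (fun t : ℝ => -(1/2) * t^2) (-(1/2) * (2 * x)) x := by
      simpa using ((hasDerivAt_pow 2 x).const_mul (-(1/2) : ℝ))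
    have h2 : HasDerivAt (fun t : ℝ => Real.exp (-(1/2)*t^2))
        (Real.exp (-(1/2)*x^2) * (-(1/2) * (2 * x))) x := h1.exp
    have h3 : HasDerivAt (fun t : ℝ => c - t) (-1) x := by
      simpa using (hasDerivAt_id x).const_sub c
    have := h3.mul h2
    refine this.congr_deriv ?_
    ring
  have htend : Tendsto (fun t : ℝ => (c - t) * Real.exp (-(1/2)*t^2)) atTop (𝓝 0) := by
    have hA : (fun t : ℝ => Real.exp (-(1/2) * t^2)) =o[atTop]
        fun t : ℝ => Real.exp (-(1/2) * t) := by
      simpa [Real.rpow_zero] using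
        rpow_mul_exp_neg_mul_sq_isLittleO_exp_neg one_half_pos 0
    have hB' : (fun t : ℝ => t * Real.exp (-(1/2)*t^2)) =o[atTop]
        fun t : ℝ => Real.exp (-(1/2) * t) := by
      simpa [Real.rpow_one] using
        rpow_mul_exp_neg_mul_sq_isLittleO_exp_neg one_half_pos 1
    have hO : (fun t : ℝ => (c - t) * Real.exp (-(1/2)*t^2)) =o[atTop]
        fun t : ℝ => Real.exp (-(1/2) * t) := by
      have : (fun t : ℝ => (c - t) * Real.exp (-(1/2)*t^2))
          = fun t => c * Real.exp (-(1/2)*t^2) - t * Real.exp (-(1/2)*t^2) := by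
        funext t; ring
      rw [this]
      exact (hA.const_mul_left c).sub hB'
    have hexp : Tendsto (fun t : ℝ => Real.exp (-(1/2) * t)) atTop (𝓝 0) := by
      refine Real.tendsto_exp_atBot.comp ?_
      exact Tendsto.const_mul_atTop_of_neg (by norm_num) tendsto_id
    exact hO.isBigO.trans_tendsto hexp
  have hftc := integral_Ioi_of_hasDerivAt_of_tendsto' hderiv
    (integrable_quad c).integrableOn htend
  simp only [sub_self, zero_mul, sub_zero] at hftc
  have hsub : ∫ x in Set.Ioi c, ((x*(x-c)) * Real.exp (-(1/2) * x^2)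
      - Real.exp (-(1/2) * x^2))
      = (∫ x in Set.Ioi c, (x*(x-c)) * Real.exp (-(1/2) * x^2))
        - ∫ x in Set.Ioi c, Real.exp (-(1/2) * x^2) :=
    integral_sub (integrable_xxc c).integrableOn integrable_E.integrableOn
  have heq : ∫ x in Set.Ioi c, ((x*(x-c)) * Real.exp (-(1/2) * x^2)
      - Real.exp (-(1/2) * x^2)) = 0 := by
    rw [← hftc]
    congr 1
    funext x
    ring
  rw [heq] at hsub
  linarith

lemma ioi_pdf_eq (c : ℝ) :
    ∫ x in Set.Ioi c, gaussianPDFReal 0 1 x = stdNormalCDF (-c) := by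
  rw [cdf_eq]
  have := integral_comp_neg_Iic (c := -c) (f := gaussianPDFReal 0 1)
  rw [neg_neg] at this
  rw [← this]
  congr 1
  funext x
  exact pdf_neg x

lemma key (c : ℝ) :
    ∫ x in Set.Ioi c, gaussianPDFReal 0 1 x * (x * (x - c)) = stdNormalCDF (-c) := by
  have h1 : ∀ x : ℝ, gaussianPDFReal 0 1 x * (x * (x - c))
      = (Real.sqrt (2*π))⁻¹ * ((x*(x-c)) * Real.exp (-(1/2) * x^2)) := by
    intro x; rw [pdf_eq]; ring
  have h2 : ∀ x : ℝ, gaussianPDFReal 0 1 x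
      = (Real.sqrt (2*π))⁻¹ * Real.exp (-(1/2) * x^2) := pdf_eq
  calc ∫ x in Set.Ioi c, gaussianPDFReal 0 1 x * (x * (x - c))
      = ∫ x in Set.Ioi c, (Real.sqrt (2*π))⁻¹ * ((x*(x-c)) * Real.exp (-(1/2) * x^2)) := by
        congr 1; funext x; exact h1 x
    _ = (Real.sqrt (2*π))⁻¹ * ∫ x in Set.Ioi c, (x*(x-c)) * Real.exp (-(1/2) * x^2) :=
        integral_const_mul _ _
    _ = (Real.sqrt (2*π))⁻¹ * ∫ x in Set.Ioi c, Real.exp (-(1/2) * x^2) := by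
        rw [halfline_eq]
    _ = ∫ x in Set.Ioi c, gaussianPDFReal 0 1 x := by
        rw [← integral_const_mul]; congr 1; funext x; exact (h2 x).symm
    _ = stdNormalCDF (-c) := ioi_pdf_eq c

lemma gauss_case (a b : ℝ) (hb : 0 < b) :
    ∫ x, b * x * max (a + b * x) 0 ∂(gaussianReal 0 1) = b^2 * stdNormalCDF (a / b) := by
  set c : ℝ := -a/b with hc
  have hbc : b * c = -a := by rw [hc]; field_simp
  rw [integral_gaussian_eq]
  have hind : (fun x : ℝ => gaussianPDFReal 0 1 x * (b * x * max (a + b*x) 0))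
      = (Set.Ioi c).indicator (fun x => b^2 * (gaussianPDFReal 0 1 x * (x * (x - c)))) := by
    funext x
    have habx : a + b * x = b * (x - c) := by rw [mul_sub, hbc]; ring
    by_cases hx : x ∈ Set.Ioi c
    · rw [Set.indicator_of_mem hx]
      have hpos : 0 ≤ a + b * x := by
        rw [habx]
        exact mul_nonneg hb.le (by simp at hx; linarith)
      rw [max_eq_left hpos, habx]
      ring
    · rw [Set.indicator_of_notMem hx]
      have hneg : a + b * x ≤ 0 := by
        rw [habx]
        simp only [Set.mem_Ioi, not_lt] at hx
        exact mul_nonpos_of_nonneg_of_nonpos hb.le (by linarith)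
      rw [max_eq_right hneg]
      ring
  rw [hind, integral_indicator measurableSet_Ioi, integral_const_mul, key c]
  have : -c = a / b := by rw [hc]; ring
  rw [this]

lemma gauss_map_neg : Measure.map (fun x : ℝ => -x) (gaussianReal 0 1) = gaussianReal 0 1 := by
  have h := gaussianReal_map_const_mul (μ := 0) (v := 1) (-1)
  have h2 : (NNReal.mk ((-1:ℝ)^2) (sq_nonneg _) * 1 : NNReal) = 1 := by
    ext; simp
  rw [h2, mul_zero] at h
  rw [← h]
  congr 1
  funext x
  ring

/-- For `G ~ N(0,1)`, `a ∈ ℝ`, `b ≠ 0`: `E[bG (a + bG)⁺] = b² Φ(a/|b|)`. -/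
theorem stmt_1 {Ω : Type*} [MeasureSpace Ω] [IsProbabilityMeasure (ℙ : Measure Ω)]
    (G : Ω → ℝ) (hG : Measure.map G ℙ = gaussianReal 0 1)
    (a b : ℝ) (hb : b ≠ 0) :
    ∫ ω, b * G ω * max (a + b * G ω) 0 ∂ℙ = b ^ 2 * stdNormalCDF (a / |b|) := by
  have hGm : AEMeasurable G ℙ := by
    by_contra h
    rw [Measure.map_of_not_aemeasurable h] at hG
    have h1 := measure_univ (μ := gaussianReal 0 1)
    rw [← hG] at h1
    simp at h1
  have hcont : Continuous fun x : ℝ => b * x * max (a + b * x) 0 := by fun_prop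
  have hstep : ∫ ω, b * G ω * max (a + b * G ω) 0 ∂ℙ
      = ∫ x, b * x * max (a + b * x) 0 ∂(gaussianReal 0 1) := by
    rw [← hG, integral_map hGm hcont.aestronglyMeasurable]
  rw [hstep]
  rcases lt_or_gt_of_ne hb with hneg | hpos
  · have hflip : ∫ x, b * x * max (a + b * x) 0 ∂(gaussianReal 0 1)
        = ∫ x, (-b) * x * max (a + (-b) * x) 0 ∂(gaussianReal 0 1) := by
      conv_lhs => rw [← gauss_map_neg]
      rw [integral_map measurable_neg.aemeasurable hcont.aestronglyMeasurable]
      congr 1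
      funext x
      rw [show a + b * -x = a + -b * x by ring]
      ring
    rw [hflip, gauss_case a (-b) (by linarith), abs_of_neg hneg]
    ring_nf
  · rw [gauss_case a b hpos, abs_of_pos hpos]
end

section
/- Let Y be a random variable with E[e^{(2+α)Y}] < ∞ for some α > 0, ψ(z) = E[e^{izY}] its characteristic function extended to the strip where defined, and c(k) = e^{αk}·E[((e^Y − e^k)⁺)²]. Then the Fourier transform of c satisfies ∫_ℝ e^{ivk} c(k) dk = ψ(v − (α+2)i) · ( 1/(α+iv) − 2/(α+1+iv) + 1/(α+2+iv) ) for all v ∈ ℝ. -/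
/-!
For fixed `y`, the weight `e^{βk} ((e^y - e^k)⁺)²` vanishes for `k > y` and expands to
`e^{2y} e^{βk} - 2 e^y e^{(β+1)k} + e^{(β+2)k}` on `k ≤ y`, so for `Re β > 0` its integral over `k`
is `e^{(β+2)y} (1/β - 2/(β+1) + 1/(β+2))`. The modulus of the integrand is the case `β = α`, so the
absolute double integral is a constant times `E[e^{(α+2)Y}]`; Fubini then lets us integrate in `k`
first, with `β = α + iv` and `y = Y`.
-/

open MeasureTheory ProbabilityTheory Real Complex Set

section Slice

variable {β : ℂ}

lemma posPart_exp_sub_exp_of_le {k y : ℝ} (hky : k ≤ y) :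
    max (rexp y - rexp k) 0 = rexp y - rexp k :=
  max_eq_left (sub_nonneg.2 (exp_le_exp.2 hky))

lemma posPart_exp_sub_exp_of_ge {k y : ℝ} (hyk : y ≤ k) : max (rexp y - rexp k) 0 = 0 :=
  max_eq_right (sub_nonpos.2 (exp_le_exp.2 hyk))

lemma cexp_mul_sq_posPart_eq_indicator (β : ℂ) (y : ℝ) :
    (fun k : ℝ => cexp (β * k) * ((max (rexp y - rexp k) 0 ^ 2 : ℝ) : ℂ)) =
      (Iic y).indicator (fun k : ℝ => (rexp y : ℂ) ^ 2 * cexp (β * k)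
        - 2 * rexp y * cexp ((β + 1) * k) + cexp ((β + 2) * k)) := by
  funext k
  by_cases hky : k ≤ y
  · rw [indicator_of_mem (mem_Iic.2 hky), posPart_exp_sub_exp_of_le hky,
      show (β + 1) * (k : ℂ) = β * k + k by ring,
      show (β + 2) * (k : ℂ) = β * k + k + k by ring]
    simp only [Complex.exp_add]
    push_cast
    ring
  · rw [indicator_of_notMem (by simpa using hky), posPart_exp_sub_exp_of_ge (not_le.1 hky).le]
    simp

lemma integrableOn_Iic_sq_posPart_expansion (hβ : 0 < β.re) (y : ℝ) :
    IntegrableOn (fun k : ℝ => (rexp y : ℂ) ^ 2 * cexp (β * k)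
      - 2 * rexp y * cexp ((β + 1) * k) + cexp ((β + 2) * k)) (Iic y) := by
  have hβ1 : 0 < (β + 1).re := by simp; linarith
  have hβ2 : 0 < (β + 2).re := by simp; linarith
  exact (((integrableOn_exp_mul_complex_Iic hβ y).const_mul _).sub
    ((integrableOn_exp_mul_complex_Iic hβ1 y).const_mul _)).add
    (integrableOn_exp_mul_complex_Iic hβ2 y)

lemma integrable_cexp_mul_sq_posPart (hβ : 0 < β.re) (y : ℝ) :
    Integrable (fun k : ℝ => cexp (β * k) * ((max (rexp y - rexp k) 0 ^ 2 : ℝ) : ℂ)) := by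
  rw [cexp_mul_sq_posPart_eq_indicator, integrable_indicator_iff measurableSet_Iic]
  exact integrableOn_Iic_sq_posPart_expansion hβ y

lemma integral_cexp_mul_sq_posPart (hβ : 0 < β.re) (y : ℝ) :
    ∫ k : ℝ, cexp (β * k) * ((max (rexp y - rexp k) 0 ^ 2 : ℝ) : ℂ)
      = cexp ((β + 2) * y) * (1 / β - 2 / (β + 1) + 1 / (β + 2)) := by
  have hβ1 : 0 < (β + 1).re := by simp; linarith
  have hβ2 : 0 < (β + 2).re := by simp; linarith
  have h0 : β ≠ 0 := fun h => by simp [h] at hβ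
  have h1 : β + 1 ≠ 0 := fun h => by simp [h] at hβ1
  have h2 : β + 2 ≠ 0 := fun h => by simp [h] at hβ2
  have i0 := (integrableOn_exp_mul_complex_Iic hβ y).const_mul ((rexp y : ℂ) ^ 2)
  have i1 := (integrableOn_exp_mul_complex_Iic hβ1 y).const_mul (2 * (rexp y : ℂ))
  have i01 : IntegrableOn (fun k : ℝ => (rexp y : ℂ) ^ 2 * cexp (β * k)
      - 2 * rexp y * cexp ((β + 1) * k)) (Iic y) := i0.sub i1
  rw [cexp_mul_sq_posPart_eq_indicator, integral_indicator measurableSet_Iic,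
    integral_add i01 (integrableOn_exp_mul_complex_Iic hβ2 y), integral_sub i0 i1,
    integral_const_mul, integral_const_mul, integral_exp_mul_complex_Iic hβ,
    integral_exp_mul_complex_Iic hβ1, integral_exp_mul_complex_Iic hβ2,
    show (β + 1) * (y : ℂ) = β * y + y by ring,
    show (β + 2) * (y : ℂ) = β * y + y + y by ring]
  simp only [Complex.exp_add]
  push_cast
  field_simp

lemma integral_exp_mul_sq_posPart {α : ℝ} (hα : 0 < α) (y : ℝ) :
    ∫ k : ℝ, rexp (α * k) * max (rexp y - rexp k) 0 ^ 2
      = rexp ((α + 2) * y) * (1 / α - 2 / (α + 1) + 1 / (α + 2)) := by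
  have h := integral_cexp_mul_sq_posPart (β := α) (by simpa using hα) y
  apply Complex.ofReal_injective
  rw [← integral_complex_ofReal]
  push_cast at h ⊢
  exact h

end Slice

lemma integrable_prod_cexp_mul_sq_posPart {Ω : Type*} [MeasurableSpace Ω] {μ : Measure Ω}
    [SFinite μ] {Y : Ω → ℝ} (hY : Measurable Y) {β : ℂ} (hβ : 0 < β.re)
    (hint : Integrable (fun ω => rexp ((β.re + 2) * Y ω)) μ) :
    Integrable (Function.uncurry fun (k : ℝ) (ω : Ω) =>
      cexp (β * k) * ((max (rexp (Y ω) - rexp k) 0 ^ 2 : ℝ) : ℂ)) (volume.prod μ) := by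
  have hmeas : AEStronglyMeasurable (Function.uncurry fun (k : ℝ) (ω : Ω) =>
      cexp (β * k) * ((max (rexp (Y ω) - rexp k) 0 ^ 2 : ℝ) : ℂ)) (volume.prod μ) := by
    apply Measurable.aestronglyMeasurable
    unfold Function.uncurry
    fun_prop
  have hnorm (k : ℝ) (ω : Ω) :
      ‖cexp (β * k) * ((max (rexp (Y ω) - rexp k) 0 ^ 2 : ℝ) : ℂ)‖
        = rexp (β.re * k) * max (rexp (Y ω) - rexp k) 0 ^ 2 := by
    simp [Complex.norm_exp]
  refine (integrable_prod_iff' hmeas).2 ⟨.of_forall fun ω => ?_, ?_⟩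
  · exact integrable_cexp_mul_sq_posPart hβ (Y ω)
  · simp_rw [Function.uncurry_apply_pair, hnorm, integral_exp_mul_sq_posPart hβ]
    exact hint.mul_const _

theorem integral_integral_cexp_mul_sq_posPart {Ω : Type*} [MeasurableSpace Ω] {μ : Measure Ω}
    [SFinite μ] {Y : Ω → ℝ} (hY : Measurable Y) {β : ℂ} (hβ : 0 < β.re)
    (hint : Integrable (fun ω => rexp ((β.re + 2) * Y ω)) μ) :
    ∫ k : ℝ, ∫ ω, cexp (β * k) * ((max (rexp (Y ω) - rexp k) 0 ^ 2 : ℝ) : ℂ) ∂μ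
      = (∫ ω, cexp ((β + 2) * Y ω) ∂μ) * (1 / β - 2 / (β + 1) + 1 / (β + 2)) := by
  rw [integral_integral_swap (integrable_prod_cexp_mul_sq_posPart hY hβ hint)]
  simp_rw [integral_cexp_mul_sq_posPart hβ]
  exact integral_mul_const _ _

/-- Let `Y` satisfy `E[e^{(2+α)Y}] < ∞` for some `α > 0` and let
`c(k) = e^{αk} E[((e^Y - e^k)⁺)²]`. Then for all `v ∈ ℝ`,
`∫ e^{ivk} c(k) dk = ψ(v - (α+2)i) (1/(α+iv) - 2/(α+1+iv) + 1/(α+2+iv))`,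
where `ψ(v - (α+2)i) = E[e^{(α+2)Y + ivY}]`. -/
theorem stmt_12 {Ω : Type*} [MeasureSpace Ω] [IsProbabilityMeasure (ℙ : Measure Ω)]
    (Y : Ω → ℝ) (hY : Measurable Y)
    (α : ℝ) (hα : 0 < α)
    (hint : Integrable (fun ω => Real.exp ((2 + α) * Y ω)) ℙ) :
    ∀ v : ℝ,
      (∫ k : ℝ, Complex.exp (Complex.I * v * k)
          * ((Real.exp (α * k)
              * ∫ ω, (max (Real.exp (Y ω) - Real.exp k) 0) ^ 2 ∂ℙ : ℝ) : ℂ))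
        = (∫ ω, Complex.exp (((α : ℂ) + 2) * (Y ω : ℂ) + Complex.I * v * (Y ω : ℂ)) ∂ℙ)
          * (1 / ((α : ℂ) + Complex.I * v) - 2 / ((α : ℂ) + 1 + Complex.I * v)
              + 1 / ((α : ℂ) + 2 + Complex.I * v)) := by
  intro v
  have hβ : 0 < ((α : ℂ) + I * v).re := by simpa using hα
  have hint' : Integrable (fun ω => rexp ((((α : ℂ) + I * v).re + 2) * Y ω)) ℙ := by
    simpa [add_comm] using hint
  have hintegrand (k : ℝ) :
      cexp (I * v * k) * ((rexp (α * k) * ∫ ω, max (rexp (Y ω) - rexp k) 0 ^ 2 ∂ℙ : ℝ) : ℂ)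
        = ∫ ω, cexp ((α + I * v) * k) * ((max (rexp (Y ω) - rexp k) 0 ^ 2 : ℝ) : ℂ) ∂ℙ := by
    rw [ofReal_mul, ← integral_complex_ofReal, ← mul_assoc, ← integral_const_mul, ofReal_exp,
      ← Complex.exp_add, add_mul, add_comm, ofReal_mul]
  simp_rw [hintegrand, integral_integral_cexp_mul_sq_posPart hY hβ hint']
  congr 1
  · congr 1 with ω
    ring_nf
  · ring_nf
end
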